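/- arXiv:1808.07054 — 3 statements merged into one kernel-verified Lean document; each statement's English description precedes it below -/
import Mathlib

section
/- Let F be a field, let d ≥ 1, and let z : Fin d → F be pairwise distinct elements. Then for every integer n ≥ 1, ∑_{ℓ ∈ Fin d} z_ℓ^n · ∏_{m ≠ ℓ} z_m · (z_m − z_ℓ)⁻¹ = (−1)^{d+1} · h_{n−d}(z_1, …, z_d) · ∏_{m ∈ Fin d} z_m, where h_j(z_1, …, z_d) denotes the complete homogeneous symmetric polynomial of degree j evaluated at z_1, …, z_d (i.e. h_j(z) = ∑_{k : Fin d → ℕ, ∑ k = j} ∏_i z_i^{k_i}), with the convention that h_j = 0 for j < 0 and h_0 = 1. -/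
open Finset

/-- The complete homogeneous symmetric polynomial of degree `j` evaluated at
`z : Fin d → F`, with the convention that it vanishes for `j < 0` and equals `1`
for `j = 0`. -/
noncomputable def completeHomogeneous {F : Type*} [Field F] {d : ℕ} (z : Fin d → F) (j : ℤ) : F :=
  if j < 0 then 0
  else ∑ k ∈ Finset.Nat.antidiagonalTuple d j.toNat, ∏ i, z i ^ k i

/-! The sum is the value at `0` of the Lagrange interpolant of `X ^ n` at the nodes `z i`, that is
of the remainder of `X ^ n` modulo `P = ∏ i, (X - z i)`. For `n = N + d` the quotient is
`∑_{i + j = N} h_i(z) X ^ j`, the reversed truncation of the generating series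
`∏ i, (1 - z i t)⁻¹ = ∑ h_i(z) t ^ i`; this is checked by induction on `d` using
`h_{j+1}(a, z) = a h_j(a, z) + h_{j+1}(z)`. Hence the remainder takes the value
`-P(0) h_N(z) = (-1) ^ (d + 1) h_N(z) ∏ i, z i` at `0`. For `n < d` the remainder is `X ^ n`
itself, which vanishes at `0`. -/

theorem Finset.Nat.sum_antidiagonalTuple_succ {M : Type*} [AddCommMonoid M] (d n : ℕ)
    (f : (Fin (d + 1) → ℕ) → M) :
    ∑ k ∈ antidiagonalTuple (d + 1) n, f k
      = ∑ p ∈ antidiagonal n, ∑ k ∈ antidiagonalTuple d p.2, f (Fin.cons p.1 k) := by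
  simp [Finset.sum, antidiagonalTuple, Multiset.Nat.antidiagonalTuple,
    List.Nat.antidiagonalTuple, HasAntidiagonal.antidiagonal, Multiset.Nat.antidiagonal,
    List.flatMap, Function.comp_def]

namespace Lagrange

open Polynomial

variable {F ι : Type*} [Field F] [DecidableEq ι] {s : Finset ι} {v : ι → F}

theorem eval_basis (x : F) (i : ι) :
    (Lagrange.basis s v i).eval x = ∏ j ∈ s.erase i, (v j - x) * (v j - v i)⁻¹ := by
  refine (eval_prod _ _ _).trans (prod_congr rfl fun j _ => ?_)
  rw [basisDivisor, eval_mul, eval_C, eval_sub, eval_X, eval_C, ← neg_sub (v j) x,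
    ← neg_sub (v j) (v i), inv_neg, neg_mul_neg, mul_comm]

theorem interpolate_eq_sub_nodal_mul (hvs : Set.InjOn v s) {f g : F[X]}
    (hdeg : (f - nodal s v * g).degree < #s) :
    interpolate s v (fun i => f.eval (v i)) = f - nodal s v * g :=
  (eq_interpolate_of_eval_eq _ hvs hdeg fun i hi => by
    rw [eval_sub, eval_mul, eval_nodal_at_node hi, zero_mul, sub_zero]).symm

end Lagrange

section CompleteHomogeneous

open Polynomial Lagrange

variable {R : Type*} [CommRing R]

noncomputable def completeHomogeneousNat {d : ℕ} (z : Fin d → R) (j : ℕ) : R :=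
  ∑ k ∈ Finset.Nat.antidiagonalTuple d j, ∏ i, z i ^ k i

theorem completeHomogeneousNat_zero {d : ℕ} (z : Fin d → R) : completeHomogeneousNat z 0 = 1 := by
  simp [completeHomogeneousNat, Finset.Nat.antidiagonalTuple_zero_right]

theorem completeHomogeneousNat_fin_zero (z : Fin 0 → R) (j : ℕ) :
    completeHomogeneousNat z j = if j = 0 then 1 else 0 := by
  cases j <;> simp [completeHomogeneousNat, Finset.Nat.antidiagonalTuple_zero_succ]

theorem completeHomogeneousNat_cons {d : ℕ} (a : R) (z : Fin d → R) (j : ℕ) :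
    completeHomogeneousNat (Fin.cons a z : Fin (d + 1) → R) j
      = ∑ p ∈ antidiagonal j, a ^ p.1 * completeHomogeneousNat z p.2 := by
  simp only [completeHomogeneousNat, Finset.Nat.sum_antidiagonalTuple_succ, Fin.prod_univ_succ,
    Fin.cons_zero, Fin.cons_succ, mul_sum]

theorem completeHomogeneousNat_cons_succ {d : ℕ} (a : R) (z : Fin d → R) (j : ℕ) :
    completeHomogeneousNat (Fin.cons a z : Fin (d + 1) → R) (j + 1)
      = a * completeHomogeneousNat (Fin.cons a z : Fin (d + 1) → R) j
        + completeHomogeneousNat z (j + 1) := by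
  simp only [completeHomogeneousNat_cons, Finset.Nat.sum_antidiagonal_succ, mul_sum, pow_succ']
  simp [add_comm, mul_assoc]

noncomputable def completeHomogeneousQuotient {d : ℕ} (z : Fin d → R) (N : ℕ) : R[X] :=
  ∑ p ∈ antidiagonal N, C (completeHomogeneousNat z p.1) * X ^ p.2

theorem completeHomogeneousQuotient_succ {d : ℕ} (a : R) (z : Fin d → R) (N : ℕ) :
    completeHomogeneousQuotient z (N + 1)
      = C (completeHomogeneousNat (Fin.cons a z : Fin (d + 1) → R) (N + 1))
        + (X - C a) * completeHomogeneousQuotient (Fin.cons a z : Fin (d + 1) → R) N := by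
  set w : Fin (d + 1) → R := Fin.cons a z
  have hX : completeHomogeneousQuotient w (N + 1)
      = C (completeHomogeneousNat w (N + 1)) + X * completeHomogeneousQuotient w N := by
    simp only [completeHomogeneousQuotient, Finset.Nat.sum_antidiagonal_succ', mul_sum, pow_succ,
      pow_zero, mul_one]
    congr 1
    exact sum_congr rfl fun p _ => by ring
  have ha : completeHomogeneousQuotient w (N + 1)
      = completeHomogeneousQuotient z (N + 1) + C a * completeHomogeneousQuotient w N := by
    simp only [completeHomogeneousQuotient, Finset.Nat.sum_antidiagonal_succ,
      completeHomogeneousNat_zero, w, completeHomogeneousNat_cons_succ, mul_sum]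
    simp only [map_one, one_mul, map_add, map_mul, add_mul, mul_assoc, sum_add_distrib]
    ring
  linear_combination hX - ha

theorem completeHomogeneousQuotient_fin_zero (z : Fin 0 → R) (N : ℕ) :
    completeHomogeneousQuotient z N = X ^ N := by
  rw [completeHomogeneousQuotient, sum_eq_single (0, N)]
  · simp [completeHomogeneousNat_zero]
  · rintro ⟨i, j⟩ hij hne
    have hi : i ≠ 0 := by rintro rfl; simp_all
    simp [completeHomogeneousNat_fin_zero, hi]
  · simp

theorem nodal_univ_cons {d : ℕ} (a : R) (z : Fin d → R) :
    nodal univ (Fin.cons a z : Fin (d + 1) → R) = (X - C a) * nodal univ z := by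
  simp [nodal, Fin.prod_univ_succ]

theorem degree_X_pow_sub_nodal_mul_completeHomogeneousQuotient_lt [Nontrivial R] {d : ℕ}
    (z : Fin d → R) (N : ℕ) :
    (X ^ (N + d) - nodal univ z * completeHomogeneousQuotient z N).degree < (d : WithBot ℕ) := by
  induction d generalizing N with
  | zero => simp [completeHomogeneousQuotient_fin_zero, nodal]
  | succ d ih =>
    obtain ⟨a, z, rfl⟩ : ∃ a z', z = Fin.cons a z' := ⟨_, _, (Fin.cons_self_tail z).symm⟩
    have hsplit : X ^ (N + (d + 1)) - nodal univ (Fin.cons a z : Fin (d + 1) → R)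
          * completeHomogeneousQuotient (Fin.cons a z : Fin (d + 1) → R) N
        = (X ^ (N + 1 + d) - nodal univ z * completeHomogeneousQuotient z (N + 1))
          + C (completeHomogeneousNat (Fin.cons a z : Fin (d + 1) → R) (N + 1)) * nodal univ z := by
      rw [nodal_univ_cons, completeHomogeneousQuotient_succ a, add_right_comm N]
      ring
    rw [hsplit]
    refine (degree_add_le _ _).trans_lt (max_lt ((ih z _).trans ?_) ?_)
    · exact_mod_cast Nat.lt_succ_self d
    · rw [← smul_eq_C_mul]
      refine (degree_smul_le _ _).trans_lt ?_
      rw [degree_nodal, card_univ, Fintype.card_fin]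
      exact_mod_cast Nat.lt_succ_self d

theorem eval_zero_completeHomogeneousQuotient {d : ℕ} (z : Fin d → R) (N : ℕ) :
    (completeHomogeneousQuotient z N).eval 0 = completeHomogeneousNat z N := by
  rw [completeHomogeneousQuotient, eval_finsetSum, sum_eq_single (N, 0)]
  · simp
  · rintro ⟨i, j⟩ hij hne
    have hj : j ≠ 0 := by rintro rfl; simp_all
    simp [hj]
  · simp

end CompleteHomogeneous

open Polynomial Lagrange

theorem exists_degree_X_pow_sub_nodal_mul_lt {F : Type*} [Field F] {d : ℕ} (z : Fin d → F)
    (n : ℕ) : ∃ q : F[X], (X ^ n - nodal univ z * q).degree < (d : WithBot ℕ)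
      ∧ q.eval 0 = completeHomogeneous z ((n : ℤ) - d) := by
  by_cases hnd : n < d
  · refine ⟨0, by simpa using hnd, ?_⟩
    rw [completeHomogeneous, if_pos (by omega), eval_zero]
  · obtain ⟨N, rfl⟩ : ∃ N, n = N + d := ⟨n - d, by omega⟩
    refine ⟨completeHomogeneousQuotient z N,
      degree_X_pow_sub_nodal_mul_completeHomogeneousQuotient_lt z N, ?_⟩
    rw [eval_zero_completeHomogeneousQuotient, completeHomogeneous, if_neg (by omega),
      show ((N + d : ℕ) - d : ℤ).toNat = N by omega, completeHomogeneousNat]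

theorem sum_lagrange_weights_pow_eq_completeHomogeneous_general
    {F : Type*} [Field F] {d : ℕ} (z : Fin d → F)
    (hz : Function.Injective z) (n : ℕ) (hn : 1 ≤ n) :
    ∑ ℓ, z ℓ ^ n * ∏ m ∈ Finset.univ.erase ℓ, z m * (z m - z ℓ)⁻¹
      = (-1) ^ (d + 1) * completeHomogeneous z ((n : ℤ) - d) * ∏ m, z m := by
  obtain ⟨q, hdeg, hq⟩ := exists_degree_X_pow_sub_nodal_mul_lt z n
  have hinterp := interpolate_eq_sub_nodal_mul (s := univ) hz.injOn
    (by rwa [card_univ, Fintype.card_fin])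
  calc ∑ ℓ, z ℓ ^ n * ∏ m ∈ Finset.univ.erase ℓ, z m * (z m - z ℓ)⁻¹
      = (interpolate univ z fun i => (X ^ n : F[X]).eval (z i)).eval 0 := by
        simp [interpolate_apply, eval_finsetSum, eval_basis]
    _ = (-1) ^ (d + 1) * completeHomogeneous z ((n : ℤ) - d) * ∏ m, z m := by
        rw [hinterp]
        simp only [eval_sub, eval_pow, eval_X, zero_pow (by omega : n ≠ 0), eval_mul, eval_nodal,
          zero_sub, prod_neg, card_univ, Fintype.card_fin, hq]
        ring

theorem sum_lagrange_weights_pow_eq_completeHomogeneous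
    {F : Type*} [Field F] {d : ℕ} (hd : 1 ≤ d) (z : Fin d → F)
    (hz : Function.Injective z) (n : ℕ) (hn : 1 ≤ n) :
    ∑ ℓ, z ℓ ^ n * ∏ m ∈ Finset.univ.erase ℓ, z m * (z m - z ℓ)⁻¹
      = (-1) ^ (d + 1) * completeHomogeneous z ((n : ℤ) - d) * ∏ m, z m :=
  sum_lagrange_weights_pow_eq_completeHomogeneous_general z hz n hn
end

section
/- Let F be a field, let d ≥ 1, and let z : Fin d → F be pairwise distinct elements. Then for every integer n with 0 ≤ n ≤ d − 1, ∑_{ℓ ∈ Fin d} z_ℓ^n · ∏_{m ≠ ℓ} z_m · (z_m − z_ℓ)⁻¹ equals 1 if n = 0 and equals 0 if 1 ≤ n ≤ d − 1. -/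
open Finset Polynomial

/-!
The weights `∏_{m ≠ ℓ} z_m (z_m - z_ℓ)⁻¹` are the values at `0` of the Lagrange basis polynomials
for the nodes `z`. Lagrange interpolation is exact on polynomials of degree `< d`, so evaluating the
interpolation formula for `X ^ n` at `0` turns the sum into `0 ^ n`.
-/

namespace Lagrange

variable {F : Type*} [Field F] {ι : Type*} [DecidableEq ι]

theorem eval_zero_basisDivisor (x y : F) : (basisDivisor x y).eval 0 = y * (y - x)⁻¹ := by
  rw [basisDivisor, eval_mul, eval_C, eval_sub, eval_X, eval_C, zero_sub, ← neg_sub y x, inv_neg,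
    neg_mul_neg, mul_comm]

theorem eval_zero_basis (s : Finset ι) (v : ι → F) (i : ι) :
    (Lagrange.basis s v i).eval 0 = ∏ j ∈ s.erase i, v j * (v j - v i)⁻¹ := by
  simp only [Lagrange.basis, eval_prod, eval_zero_basisDivisor]

theorem eval_zero_eq_sum_mul_prod {s : Finset ι} {v : ι → F} (hvs : Set.InjOn v s) {f : F[X]}
    (hf : f.degree < #s) :
    f.eval 0 = ∑ i ∈ s, f.eval (v i) * ∏ j ∈ s.erase i, v j * (v j - v i)⁻¹ := by
  conv_lhs => rw [eq_interpolate hvs hf, interpolate_apply]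
  simp only [eval_finsetSum, eval_mul, eval_C, eval_zero_basis]

end Lagrange

theorem sum_lagrange_weights_pow_lt
    {F : Type*} [Field F] {d : ℕ} (hd : 1 ≤ d) (z : Fin d → F)
    (hz : Function.Injective z) (n : ℕ) (hn : n ≤ d - 1) :
    ∑ ℓ, z ℓ ^ n * ∏ m ∈ Finset.univ.erase ℓ, z m * (z m - z ℓ)⁻¹
      = if n = 0 then 1 else 0 := by
  have hdeg : (X ^ n : F[X]).degree < #(univ : Finset (Fin d)) := by
    rw [degree_X_pow, card_univ, Fintype.card_fin, Nat.cast_lt]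
    omega
  have h := Lagrange.eval_zero_eq_sum_mul_prod hz.injOn hdeg
  simp only [eval_pow, eval_X] at h
  rw [← h, zero_pow_eq]
end

section
/- Let F be a field, let a₁, s ∈ F with s ≠ 0, and consider the Weierstrass curve W : y² + a₁xy + sy = x³ over F (coefficients a₁, a₂ = 0, a₃ = s, a₄ = 0, a₆ = 0). Then (0,0) is a nonsingular point of W, and the corresponding point P of the group of nonsingular rational points of W satisfies P ≠ 0 and 3 • P = 0; i.e. P generates a subgroup isomorphic to ℤ/3ℤ. -/
/-!
On `y² + a₁xy + a₃y = x³` the tangent line at `(0, 0)` is `y = 0`, which meets the cubic `x³` only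
at `x = 0`: the origin is a flex. So the chord-tangent construction gives `P + P = -P`, whence
`3 • P = 0`, while `P ≠ 0` because `P` is an affine point.
-/

namespace WeierstrassCurve.Affine

variable {F : Type*} [Field F] {W : Affine F}

lemma negY_zero_zero : W.negY 0 0 = -W.a₃ := by
  simp [negY]

lemma slope_zero_zero [DecidableEq F] (h₃ : W.a₃ ≠ 0) : W.slope 0 0 0 0 = W.a₄ / W.a₃ := by
  rw [slope_of_Y_ne rfl (by simpa [negY_zero_zero] using h₃), negY_zero_zero]
  simp

namespace Point

variable [DecidableEq F]

lemma some_zero_zero_add_self (h₂ : W.a₂ = 0) (h₄ : W.a₄ = 0) (h : W.Nonsingular 0 0) :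
    some _ _ h + some _ _ h = -some _ _ h := by
  have h₃ : W.a₃ ≠ 0 := by simpa [h₄] using (nonsingular_zero.mp h).2
  have hy : (0 : F) ≠ W.negY 0 0 := by simpa [negY_zero_zero] using h₃
  have hslope : W.slope 0 0 0 0 = 0 := by simp [slope_zero_zero h₃, h₄]
  rw [add_self_of_Y_ne' hy, neg_inj, some.injEq, hslope]
  simp [addX, negAddY, h₂]

lemma three_nsmul_some_zero_zero (h₂ : W.a₂ = 0) (h₄ : W.a₄ = 0) (h : W.Nonsingular 0 0) :
    3 • some _ _ h = 0 := by
  rw [succ_nsmul, two_nsmul, some_zero_zero_add_self h₂ h₄ h, neg_add_cancel]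

end Point

end WeierstrassCurve.Affine

open Classical in
theorem PSU3_model_three_torsion_point {F : Type*} [Field F] (a₁ s : F) (hs : s ≠ 0) :
    let W : WeierstrassCurve.Affine F := ⟨a₁, 0, s, 0, 0⟩
    ∃ h : W.Nonsingular 0 0,
      WeierstrassCurve.Affine.Point.some _ _ h ≠ 0 ∧
        3 • WeierstrassCurve.Affine.Point.some _ _ h = 0 := by
  intro W
  have h : W.Nonsingular 0 0 := WeierstrassCurve.Affine.nonsingular_zero.mpr ⟨rfl, .inl hs⟩
  exact ⟨h, WeierstrassCurve.Affine.Point.some_ne_zero h,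
    WeierstrassCurve.Affine.Point.three_nsmul_some_zero_zero rfl rfl h⟩
end
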